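/- arXiv:2012.05435 — 6 statements merged into one kernel-verified Lean document; each statement's English description precedes it below -/
import Mathlib

section
/- (Sufficient descent of one proximal-gradient step.) Let γ > L and let u_plus be a minimizer over E of u ↦ φ(u) + (γ/2)·‖u − v + (1/γ)·∇f(v)‖². Then the objective Ψ = f + φ satisfies Ψ(u_plus) + ((γ − L)/2)·‖u_plus − v‖² ≤ Ψ(v). -/
open scoped RealInnerProductSpace

/-!
Along the segment from `v` to `u`, the derivative of `f` exceeds that of its linearization at
`v` by at most `L t ‖u - v‖²`, which gives the descent lemma
`f u ≤ f v + ⟪∇f v, u - v⟫ + (L/2)‖u - v‖²`. Completing the square, testing the minimality of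
`u_plus` against `u = v` gives `φ u_plus + (γ/2)‖u_plus - v‖² + ⟪∇f v, u_plus - v⟫ ≤ φ v`,
and adding the two inequalities trades `⟪∇f v, u_plus - v⟫` for the loss `(L/2)‖u_plus - v‖²`.
-/

section DescentLemma

variable {E : Type*} [NormedAddCommGroup E] [InnerProductSpace ℝ E]
  {f : E → ℝ} {gradf : E → E} {L : ℝ}

theorem hasDerivAt_comp_add_smul_of_hasFDerivAt_innerSL {g v w : E} {t : ℝ}
    (hf : HasFDerivAt f (innerSL ℝ g) (v + t • w)) :
    HasDerivAt (fun s : ℝ => f (v + s • w)) ⟪g, w⟫ t := by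
  have hline : HasDerivAt (fun s : ℝ => v + s • w) w t := by
    simpa using ((hasDerivAt_id t).smul_const w).const_add v
  exact hf.comp_hasDerivAt t hline

theorem inner_apply_add_smul_le_of_lipschitz
    (hlip : ∀ x y : E, ‖gradf x - gradf y‖ ≤ L * ‖x - y‖) (v w : E) {t : ℝ} (ht : 0 ≤ t) :
    ⟪gradf (v + t • w), w⟫ ≤ ⟪gradf v, w⟫ + L * t * ‖w‖ ^ 2 := by
  have hdiff : ⟪gradf (v + t • w) - gradf v, w⟫ ≤ L * t * ‖w‖ ^ 2 :=
    calc ⟪gradf (v + t • w) - gradf v, w⟫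
        ≤ ‖gradf (v + t • w) - gradf v‖ * ‖w‖ := real_inner_le_norm _ _
      _ ≤ L * ‖(v + t • w) - v‖ * ‖w‖ := by gcongr; exact hlip _ _
      _ = L * t * ‖w‖ ^ 2 := by
        rw [add_sub_cancel_left, norm_smul, Real.norm_of_nonneg ht]; ring
  rw [inner_sub_left] at hdiff
  linarith

theorem le_add_inner_add_sq_of_lipschitz_gradient
    (hgrad : ∀ x : E, HasFDerivAt f (innerSL ℝ (gradf x)) x)
    (hlip : ∀ x y : E, ‖gradf x - gradf y‖ ≤ L * ‖x - y‖) (v u : E) :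
    f u ≤ f v + ⟪gradf v, u - v⟫ + (L / 2) * ‖u - v‖ ^ 2 := by
  set w := u - v
  have hderiv (t : ℝ) : HasDerivAt (fun s : ℝ => f (v + s • w)) ⟪gradf (v + t • w), w⟫ t :=
    hasDerivAt_comp_add_smul_of_hasFDerivAt_innerSL (hgrad _)
  have hbound (t : ℝ) :
      HasDerivAt (fun s : ℝ => f v + s * ⟪gradf v, w⟫ + (L / 2) * s ^ 2 * ‖w‖ ^ 2)
        (⟪gradf v, w⟫ + L * t * ‖w‖ ^ 2) t := by
    refine ((((hasDerivAt_id t).mul_const ⟪gradf v, w⟫).const_add (f v)).add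
      (((hasDerivAt_pow 2 t).const_mul (L / 2)).mul_const (‖w‖ ^ 2))).congr_deriv ?_
    simp only [Nat.cast_ofNat, Nat.add_one_sub_one, pow_one]
    ring
  have hle := image_le_of_deriv_right_le_deriv_boundary
    (fun t _ => (hderiv t).continuousAt.continuousWithinAt)
    (fun t _ => (hderiv t).hasDerivWithinAt) (by simp)
    (fun t _ => (hbound t).continuousAt.continuousWithinAt)
    (fun t _ => (hbound t).hasDerivWithinAt)
    (fun t ht => inner_apply_add_smul_le_of_lipschitz hlip v w ht.1)
    (Set.right_mem_Icc.2 zero_le_one)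
  simpa [w] using hle

end DescentLemma

theorem half_mul_norm_add_inv_smul_sq {E : Type*} [NormedAddCommGroup E]
    [InnerProductSpace ℝ E] {γ : ℝ} (hγ : γ ≠ 0) (a g : E) :
    (γ / 2) * ‖a + (1 / γ) • g‖ ^ 2 =
      (γ / 2) * ‖a‖ ^ 2 + ⟪g, a⟫ + (γ / 2) * ‖(1 / γ) • g‖ ^ 2 := by
  rw [norm_add_sq_real, real_inner_smul_right, real_inner_comm]
  field_simp

/-- Sufficient descent of one proximal-gradient step: if `γ > L`
and `u_plus` minimizes `u ↦ φ u + (γ/2)·‖u − v + (1/γ)·∇f(v)‖²`, then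
`Ψ(u_plus) + ((γ − L)/2)·‖u_plus − v‖² ≤ Ψ(v)` where `Ψ = f + φ`. -/
theorem stmt2
    {E : Type*} [NormedAddCommGroup E] [InnerProductSpace ℝ E]
    (f : E → ℝ) (φ : E → ℝ) (gradf : E → E) (L : ℝ)
    (hL : 0 < L)
    (hgrad : ∀ x : E, HasFDerivAt f (innerSL ℝ (gradf x)) x)
    (hlip : ∀ x y : E, ‖gradf x - gradf y‖ ≤ L * ‖x - y‖)
    (γ : ℝ) (hγ : γ > L) (v : E) (u_plus : E)
    (hmin : ∀ u : E,
      φ u_plus + (γ / 2) * ‖u_plus - v + (1 / γ) • gradf v‖ ^ 2 ≤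
        φ u + (γ / 2) * ‖u - v + (1 / γ) • gradf v‖ ^ 2) :
    (f u_plus + φ u_plus) + ((γ - L) / 2) * ‖u_plus - v‖ ^ 2 ≤ f v + φ v := by
  have hγ0 : γ ≠ 0 := (hL.trans hγ).ne'
  have hdescent := le_add_inner_add_sq_of_lipschitz_gradient hgrad hlip v u_plus
  have hprox := hmin v
  rw [half_mul_norm_add_inv_smul_sq hγ0, half_mul_norm_add_inv_smul_sq hγ0, sub_self,
    norm_zero, inner_zero_right] at hprox
  linarith
end

section
/- (Fixed points of the proximal-gradient step are minimizers.) Let f be convex and φ be convex, and let γ > 0. If u* ∈ E minimizes over E the objective u ↦ φ(u) + (γ/2)·‖u − u* + (1/γ)·∇f(u*)‖² (i.e. u* is a fixed point of the proximal-gradient step based at itself), then u* is a global minimizer of Ψ = f + φ over E. -/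
/-!
The gradient inequality for the convex `f` gives `f u⋆ + ⟪∇f u⋆, u - u⋆⟫ ≤ f u`. Expanding the
square, the fixed-point property says that `u⋆` minimizes `φ + ⟪∇f u⋆, · - u⋆⟫` up to the
quadratic term `(γ/2)‖· - u⋆‖²`; testing it on the segment from `u⋆` to `u` and using the
convexity of `φ`, that term is of second order in the step length and disappears in the limit,
so `φ u⋆ ≤ φ u + ⟪∇f u⋆, u - u⋆⟫`. Adding the two inequalities gives the claim.
-/

open Set Filter Topology
open scoped RealInnerProductSpace

lemma le_of_forall_mem_Ioc_le_add_mul {a b M : ℝ} (h : ∀ t ∈ Ioc (0 : ℝ) 1, a ≤ b + t * M) :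
    a ≤ b := by
  have hcont : Continuous fun t : ℝ => b + t * M := by fun_prop
  have hlim : Tendsto (fun t : ℝ => b + t * M) (𝓝[>] 0) (𝓝 b) := by
    simpa using (hcont.tendsto 0).mono_left nhdsWithin_le_nhds
  refine ge_of_tendsto hlim ?_
  filter_upwards [Ioc_mem_nhdsGT (zero_lt_one' ℝ)] with t ht using h t ht

section NormedSpace

variable {E : Type*} [NormedAddCommGroup E] [NormedSpace ℝ E] {f : E → ℝ}

lemma ConvexOn.comp_lineMap (hf : ConvexOn ℝ univ f) (x y : E) :
    ConvexOn ℝ univ (fun t : ℝ => f (AffineMap.lineMap (k := ℝ) x y t)) := by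
  have h := hf.comp_affineMap (AffineMap.lineMap x y)
  rwa [preimage_univ] at h

lemma ConvexOn.add_fderiv_sub_le (hf : ConvexOn ℝ univ f) {f' : E →L[ℝ] ℝ} {x : E}
    (hf' : HasFDerivAt f f' x) (y : E) : f x + f' (y - x) ≤ f y := by
  have hline : HasDerivAt (fun t : ℝ => AffineMap.lineMap (k := ℝ) x y t) (y - x) 0 := by
    simpa [AffineMap.lineMap_apply_module', add_comm] using
      ((hasDerivAt_id (0 : ℝ)).smul_const (y - x)).add_const x
  have hderiv : HasDerivAt (fun t : ℝ => f (AffineMap.lineMap (k := ℝ) x y t)) (f' (y - x)) 0 := by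
    have hf'0 : HasFDerivAt f f' (AffineMap.lineMap (k := ℝ) x y 0) := by
      rwa [AffineMap.lineMap_apply_zero]
    exact hf'0.comp_hasDerivAt 0 hline
  have hslope := (hf.comp_lineMap x y).le_slope_of_hasDerivAt (mem_univ 0) (mem_univ 1)
    zero_lt_one hderiv
  simp only [slope_def_field, AffineMap.lineMap_apply_one, AffineMap.lineMap_apply_zero] at hslope
  linarith

lemma ConvexOn.le_add_of_forall_le_add_sq (hf : ConvexOn ℝ univ f) (ℓ : E →L[ℝ] ℝ) (c : ℝ)
    {x : E} (h : ∀ y, f x ≤ f y + ℓ (y - x) + c * ‖y - x‖ ^ 2) (y : E) :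
    f x ≤ f y + ℓ (y - x) := by
  refine le_of_forall_mem_Ioc_le_add_mul (M := c * ‖y - x‖ ^ 2) fun t ⟨ht0, ht1⟩ => ?_
  have hstep : AffineMap.lineMap (k := ℝ) x y t - x = t • (y - x) := by
    rw [AffineMap.lineMap_apply_module', add_sub_cancel_right]
  have hquad := h (AffineMap.lineMap (k := ℝ) x y t)
  rw [hstep, map_smul, smul_eq_mul, norm_smul, mul_pow, Real.norm_eq_abs, sq_abs] at hquad
  have hconv : f (AffineMap.lineMap (k := ℝ) x y t) ≤ (1 - t) * f x + t * f y := by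
    simpa [AffineMap.lineMap_apply_module] using
      hf.2 (mem_univ x) (mem_univ y) (sub_nonneg.2 ht1) ht0.le (sub_add_cancel 1 t)
  have hscaled : t * f x ≤ t * (f y + ℓ (y - x) + t * (c * ‖y - x‖ ^ 2)) := by
    nlinarith
  linarith [le_of_mul_le_mul_left hscaled ht0]

end NormedSpace

/-- Fixed points of the proximal-gradient step are minimizers:
if `f` and `φ` are convex, `γ > 0`, and `u_star` minimizes
`u ↦ φ u + (γ/2)·‖u − u_star + (1/γ)·∇f(u_star)‖²`, then `u_star` is a global
minimizer of `Ψ = f + φ`. -/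
theorem stmt5
    {E : Type*} [NormedAddCommGroup E] [InnerProductSpace ℝ E]
    (f : E → ℝ) (φ : E → ℝ) (gradf : E → E)
    (hf : ConvexOn ℝ Set.univ f)
    (hgrad : ∀ x : E, HasFDerivAt f (innerSL ℝ (gradf x)) x)
    (hφ : ConvexOn ℝ Set.univ φ)
    (γ : ℝ) (hγ : 0 < γ) (u_star : E)
    (hmin : ∀ u : E,
      φ u_star + (γ / 2) * ‖u_star - u_star + (1 / γ) • gradf u_star‖ ^ 2 ≤
        φ u + (γ / 2) * ‖u - u_star + (1 / γ) • gradf u_star‖ ^ 2) :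
    ∀ u : E, f u_star + φ u_star ≤ f u + φ u := by
  set g := gradf u_star
  have hprox : ∀ u, φ u_star ≤ φ u + innerSL ℝ g (u - u_star) + γ / 2 * ‖u - u_star‖ ^ 2 := by
    intro u
    have h := hmin u
    rw [sub_self, zero_add, norm_add_sq_real, real_inner_smul_right] at h
    have hcross : γ / 2 * (2 * (1 / γ * ⟪u - u_star, g⟫)) = ⟪g, u - u_star⟫ := by
      rw [real_inner_comm]; field_simp
    rw [innerSL_apply_apply]
    linarith
  intro u
  have hφ_opt := hφ.le_add_of_forall_le_add_sq (innerSL ℝ g) (γ / 2) hprox u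
  have hf_tangent := hf.add_fderiv_sub_le (hgrad u_star) u
  linarith
end

section
/- (Proposition 1, part 2, convex version: accumulation points of the controlled propagation are minimizers.) Let (u^t), (v^t) be sequences in E and (γ^t) real parameters with 0 < γ_min ≤ γ^t ≤ γ_max for all t, such that u^{t+1} minimizes over E the objective u ↦ φ(u) + (γ^t/2)·‖u − v^t + (1/γ^t)·∇f(v^t)‖² for every t, and ‖u^{t+1} − v^t‖ → 0 as t → ∞. If u* ∈ E is an accumulation point of (v^t), i.e. v^{t_p} → u* along a subsequence t_p → ∞, then u* is a global minimizer of Ψ = f + φ over E. -/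
open scoped RealInnerProductSpace
open Set Filter Topology

/-! Passing to the limit along `t_p` in the optimality of `u^{t+1}` for the
forward-backward surrogate (after expanding the square and bounding `γ^t ≤ γ_max`) gives
`φ u* ≤ φ w + γ_max/2 ‖w - u*‖² + ⟪w - u*, ∇f u*⟫` for every `w`. Adding the gradient
inequality of the convex `f` at `u*` yields `Ψ u* ≤ Ψ w + γ_max/2 ‖w - u*‖²`. Testing this
at `w = u* + s (x - u*)` and using convexity of `Ψ` gives
`Ψ u* ≤ Ψ x + s γ_max/2 ‖x - u*‖²`, and `s → 0⁺` concludes. -/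

theorem ConvexOn.add_fderiv_sub_le_s6 {F : Type*} [NormedAddCommGroup F] [NormedSpace ℝ F]
    {f : F → ℝ} {f' : F →L[ℝ] ℝ} {s : Set F} {a x : F} (hf : ConvexOn ℝ s f)
    (ha : a ∈ s) (hx : x ∈ s) (hf' : HasFDerivAt f f' a) :
    f a + f' (x - a) ≤ f x := by
  let L : ℝ →ᵃ[ℝ] F := AffineMap.lineMap a x
  have hderiv : HasDerivAt (f ∘ L) (f' (x - a)) 0 := by
    have hL : HasDerivAt L (x - a) 0 := AffineMap.hasDerivAt_lineMap
    exact (by simpa [L] using hf' : HasFDerivAt f f' (L 0)).comp_hasDerivAt 0 hL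
  have hslope := (hf.comp_affineMap L).le_slope_of_hasDerivAt
    (by simpa [L] using ha) (by simpa [L] using hx) one_pos hderiv
  simp only [slope_def_field, Function.comp_apply, sub_zero, div_one] at hslope
  simp only [L, AffineMap.lineMap_apply_zero, AffineMap.lineMap_apply_one] at hslope
  linarith

theorem ConvexOn.le_of_forall_le_add_mul_norm_sub_sq {F : Type*} [SeminormedAddCommGroup F]
    [NormedSpace ℝ F] {Ψ : F → ℝ} {a : F} {c : ℝ} (hΨ : ConvexOn ℝ univ Ψ)
    (h : ∀ w, Ψ a ≤ Ψ w + c * ‖w - a‖ ^ 2) (x : F) : Ψ a ≤ Ψ x := by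
  have hsmall : ∀ s ∈ Ioc (0 : ℝ) 1, Ψ a ≤ Ψ x + s * (c * ‖x - a‖ ^ 2) := by
    rintro s ⟨hs0, hs1⟩
    have hconv : Ψ ((1 - s) • a + s • x) ≤ (1 - s) * Ψ a + s * Ψ x :=
      hΨ.2 (mem_univ a) (mem_univ x) (sub_nonneg.2 hs1) hs0.le (sub_add_cancel 1 s)
    have hnorm : ‖(1 - s) • a + s • x - a‖ = s * ‖x - a‖ := by
      rw [show (1 - s) • a + s • x - a = s • (x - a) by module, norm_smul,
        Real.norm_of_nonneg hs0.le]
    have hquad := h ((1 - s) • a + s • x)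
    rw [hnorm] at hquad
    have hscaled : s * Ψ a ≤ s * (Ψ x + s * (c * ‖x - a‖ ^ 2)) := by linarith
    exact le_of_mul_le_mul_left hscaled hs0
  have hlim :
      Tendsto (fun s : ℝ => Ψ x + s * (c * ‖x - a‖ ^ 2)) (𝓝[>] 0) (𝓝 (Ψ x)) := by
    have hcont : Continuous fun s : ℝ => Ψ x + s * (c * ‖x - a‖ ^ 2) := by fun_prop
    simpa using (hcont.tendsto 0).mono_left nhdsWithin_le_nhds
  exact ge_of_tendsto hlim (by filter_upwards [Ioc_mem_nhdsGT one_pos] using hsmall)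

section ProxGrad

variable {E : Type*} [NormedAddCommGroup E] [InnerProductSpace ℝ E]

/-- The surrogate minimized by `u^{t+1}`, with `v = v^t`, `g = ∇f(v^t)` and `γ = γ^t`. -/
noncomputable def proxGradObjective (φ : E → ℝ) (γ : ℝ) (v g x : E) : ℝ :=
  φ x + γ / 2 * ‖x - v + (1 / γ) • g‖ ^ 2

theorem proxGradObjective_eq {φ : E → ℝ} {γ : ℝ} (hγ : γ ≠ 0) (v g x : E) :
    proxGradObjective φ γ v g x =
      φ x + γ / 2 * ‖x - v‖ ^ 2 + ⟪x - v, g⟫ + ‖g‖ ^ 2 / (2 * γ) := by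
  rw [proxGradObjective, norm_add_sq_real, norm_smul, real_inner_smul_right, mul_pow,
    Real.norm_eq_abs, sq_abs]
  field_simp
  ring

theorem le_add_of_proxGradObjective_le {φ : E → ℝ} {γ c : ℝ} {v g p w : E} (hγ : 0 < γ)
    (hγc : γ ≤ c) (h : proxGradObjective φ γ v g p ≤ proxGradObjective φ γ v g w) :
    φ p ≤ φ w + c / 2 * ‖w - v‖ ^ 2 + ⟪w - p, g⟫ := by
  rw [proxGradObjective_eq hγ.ne', proxGradObjective_eq hγ.ne'] at h
  have hinner : ⟪w - p, g⟫ = ⟪w - v, g⟫ - ⟪p - v, g⟫ := by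
    rw [← inner_sub_left, sub_sub_sub_cancel_right]
  have hp : 0 ≤ γ / 2 * ‖p - v‖ ^ 2 := by positivity
  have hw : γ / 2 * ‖w - v‖ ^ 2 ≤ c / 2 * ‖w - v‖ ^ 2 := by gcongr
  linarith

end ProxGrad

/-- Proposition 1, part 2, convex version: accumulation points of
the controlled propagation are global minimizers of `Ψ = f + φ`. -/
theorem stmt6
    {E : Type*} [NormedAddCommGroup E] [InnerProductSpace ℝ E]
    (f : E → ℝ) (φ : E → ℝ) (gradf : E → E)
    (hf : ConvexOn ℝ Set.univ f)
    (hgrad : ∀ x : E, HasFDerivAt f (innerSL ℝ (gradf x)) x)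
    (hgradcont : Continuous gradf)
    (hφ : ConvexOn ℝ Set.univ φ) (hφcont : Continuous φ)
    (Ψ : E → ℝ) (hΨ : ∀ x : E, Ψ x = f x + φ x)
    (u v : ℕ → E) (γ : ℕ → ℝ) (γ_min γ_max : ℝ)
    (hγmin : 0 < γ_min) (hγbound : ∀ t : ℕ, γ_min ≤ γ t ∧ γ t ≤ γ_max)
    (hmin : ∀ t : ℕ, ∀ x : E,
      φ (u (t + 1)) + (γ t / 2) * ‖u (t + 1) - v t + (1 / γ t) • gradf (v t)‖ ^ 2 ≤
        φ x + (γ t / 2) * ‖x - v t + (1 / γ t) • gradf (v t)‖ ^ 2)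
    (hdiff : Filter.Tendsto (fun t : ℕ => ‖u (t + 1) - v t‖) Filter.atTop (nhds 0))
    (u_star : E) (tp : ℕ → ℕ) (htp : StrictMono tp)
    (hacc : Filter.Tendsto (fun p : ℕ => v (tp p)) Filter.atTop (nhds u_star)) :
    ∀ x : E, Ψ u_star ≤ Ψ x := by
  have hu : Tendsto (fun p => u (tp p + 1)) atTop (𝓝 u_star) :=
    hacc.congr_dist <| by
      simpa only [dist_eq_norm', Function.comp_def] using hdiff.comp htp.tendsto_atTop
  have hgradu : Tendsto (fun p => gradf (v (tp p))) atTop (𝓝 (gradf u_star)) :=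
    (hgradcont.tendsto u_star).comp hacc
  have hφlim : ∀ w, φ u_star ≤
      φ w + γ_max / 2 * ‖w - u_star‖ ^ 2 + ⟪w - u_star, gradf u_star⟫ := fun w =>
    le_of_tendsto_of_tendsto' ((hφcont.tendsto u_star).comp hu)
      ((tendsto_const_nhds.add
          (tendsto_const_nhds.mul ((tendsto_const_nhds.sub hacc).norm.pow 2))).add
        ((tendsto_const_nhds.sub hu).inner hgradu))
      fun p => le_add_of_proxGradObjective_le (hγmin.trans_le (hγbound (tp p)).1)
        (hγbound (tp p)).2 (hmin (tp p) w)
  have hΨconv : ConvexOn ℝ univ Ψ := (funext hΨ : Ψ = f + φ) ▸ hf.add hφ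
  refine hΨconv.le_of_forall_le_add_mul_norm_sub_sq (c := γ_max / 2) fun w => ?_
  have htangent := hf.add_fderiv_sub_le_s6 (mem_univ u_star) (mem_univ w) (hgrad u_star)
  rw [innerSL_apply_apply, real_inner_comm] at htangent
  rw [hΨ, hΨ]
  linarith [hφlim w]
end

section
/- (Proposition 2: fixed-point convergence of the propagative control mechanism for partially-defined models.) Let γ^0 > 0, η > 1, c > 0, L > 0, and set γ^t = γ^0·η^t. Let (u^t), (u_d^{t+1}), (u_c^{t+1}) be sequences in E such that for every t: (i) ‖u_d^{t+1} − u^t‖ ≤ √(c/γ^t) (the bounded-perturbation condition on the composed generative–discriminative operator applied to u^t); (ii) ∇f(u_c^{t+1}) + γ^t·(u_c^{t+1} − u_d^{t+1}) = 0 (the first-order optimality condition of the correction step); and (iii) u^{t+1} = u_c^{t+1} if ‖∇f(u_c^{t+1})‖ ≤ L and u^{t+1} = u^t otherwise (the optimality-checking rule). Then (u^t) is a Cauchy sequence and converges to some fixed point u* ∈ E. -/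
/-!
Each accepted correction `u_c` lies within `‖∇f(u_c)‖ / γ^t ≤ L / γ^t` of `u_d`, which lies
within `√(c / γ^t)` of `u^t`; a rejected one does not move `u` at all. So the steps of `u` are
dominated by `L / γ^t + √(c / γ^t)`, a sum of two geometric sequences of ratios `η⁻¹` and
`(√η)⁻¹`, and a sequence with summable steps is Cauchy.
-/

lemma Real.summable_sqrt_mul_geometric {r : ℝ} (b : ℝ) (hr₀ : 0 ≤ r) (hr₁ : r < 1) :
    Summable fun t : ℕ => √(b * r ^ t) := by
  have hsqrt_pow : ∀ t : ℕ, √(r ^ t) = √r ^ t := fun t => by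
    rw [← Real.sqrt_sq (pow_nonneg (Real.sqrt_nonneg r) t), ← pow_mul, mul_comm, pow_mul,
      Real.sq_sqrt hr₀]
  simp_rw [Real.sqrt_mul' b (pow_nonneg hr₀ _), hsqrt_pow]
  have hsqrt_lt_one : √r < 1 := Real.sqrt_one ▸ Real.sqrt_lt_sqrt hr₀ hr₁
  exact (summable_geometric_of_lt_one (Real.sqrt_nonneg r) hsqrt_lt_one).mul_left _

lemma div_mul_pow_eq_div_mul_inv_pow (b a η : ℝ) (t : ℕ) :
    b / (a * η ^ t) = b / a * η⁻¹ ^ t := by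
  rw [inv_pow, div_mul_eq_div_div, div_eq_mul_inv (b / a)]

lemma summable_div_mul_geometric (b a : ℝ) {η : ℝ} (hη : 1 < η) :
    Summable fun t : ℕ => b / (a * η ^ t) := by
  simp_rw [div_mul_pow_eq_div_mul_inv_pow]
  exact (summable_geometric_of_lt_one (by positivity) (inv_lt_one_of_one_lt₀ hη)).mul_left _

lemma summable_sqrt_div_mul_geometric (b a : ℝ) {η : ℝ} (hη : 1 < η) :
    Summable fun t : ℕ => √(b / (a * η ^ t)) := by
  simp_rw [div_mul_pow_eq_div_mul_inv_pow]
  exact Real.summable_sqrt_mul_geometric _ (by positivity) (inv_lt_one_of_one_lt₀ hη)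

lemma norm_sub_le_of_add_smul_sub_eq_zero {E : Type*} [NormedAddCommGroup E] [NormedSpace ℝ E]
    {g x y : E} {γ L : ℝ} (hγ : 0 < γ) (hxy : g + γ • (x - y) = 0) (hg : ‖g‖ ≤ L) :
    ‖x - y‖ ≤ L / γ := by
  have hnorm : γ * ‖x - y‖ = ‖g‖ := by
    rw [← norm_neg g, ← eq_neg_of_add_eq_zero_right hxy, norm_smul, Real.norm_of_nonneg hγ.le]
  rw [le_div_iff₀ hγ, mul_comm, hnorm]
  exact hg

theorem stmt9_general
    {E : Type*} [NormedAddCommGroup E] [InnerProductSpace ℝ E] [CompleteSpace E]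
    (gradf : E → E)
    (γ0 η c L : ℝ) (hγ0 : 0 < γ0) (hη : 1 < η) (hL : 0 < L)
    (γ : ℕ → ℝ) (hγ : ∀ t : ℕ, γ t = γ0 * η ^ t)
    (u u_d u_c : ℕ → E)
    (hbound : ∀ t : ℕ, ‖u_d (t + 1) - u t‖ ≤ Real.sqrt (c / γ t))
    (hopt : ∀ t : ℕ,
      gradf (u_c (t + 1)) + γ t • (u_c (t + 1) - u_d (t + 1)) = 0)
    (hcheck : ∀ t : ℕ,
      u (t + 1) = if ‖gradf (u_c (t + 1))‖ ≤ L then u_c (t + 1) else u t) :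
    CauchySeq u ∧ ∃ u_star : E, Filter.Tendsto u Filter.atTop (nhds u_star) := by
  have hstep : ∀ t, dist (u t) (u (t + 1)) ≤ √(c / γ t) + L / γ t := by
    intro t
    have hγt : 0 < γ t := by rw [hγ t]; positivity
    rw [hcheck t]
    split_ifs with hacc
    · calc dist (u t) (u_c (t + 1))
          ≤ dist (u t) (u_d (t + 1)) + dist (u_d (t + 1)) (u_c (t + 1)) := dist_triangle _ _ _
        _ ≤ √(c / γ t) + L / γ t := by
          rw [dist_comm, dist_eq_norm, dist_comm, dist_eq_norm]
          exact add_le_add (hbound t) (norm_sub_le_of_add_smul_sub_eq_zero hγt (hopt t) hacc)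
    · rw [dist_self]
      positivity
  have hsummable : Summable fun t => √(c / γ t) + L / γ t := by
    simp_rw [hγ]
    exact (summable_sqrt_div_mul_geometric c γ0 hη).add (summable_div_mul_geometric L γ0 hη)
  have hcauchy : CauchySeq u := cauchySeq_of_dist_le_of_summable _ hstep hsummable
  exact ⟨hcauchy, cauchySeq_tendsto_of_complete hcauchy⟩

/-- Proposition 2: fixed-point convergence of the propagative
control mechanism for partially-defined models: with `γ t = γ0·η^t`, the
bounded-perturbation condition, the first-order optimality of the correction,
and the optimality-checking rule, the sequence `u` is Cauchy and converges. -/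
theorem stmt9
    {E : Type*} [NormedAddCommGroup E] [InnerProductSpace ℝ E] [CompleteSpace E]
    (f : E → ℝ) (gradf : E → E)
    (hgrad : ∀ x : E, HasFDerivAt f (innerSL ℝ (gradf x)) x)
    (γ0 η c L : ℝ) (hγ0 : 0 < γ0) (hη : 1 < η) (hc : 0 < c) (hL : 0 < L)
    (γ : ℕ → ℝ) (hγ : ∀ t : ℕ, γ t = γ0 * η ^ t)
    (u u_d u_c : ℕ → E)
    (hbound : ∀ t : ℕ, ‖u_d (t + 1) - u t‖ ≤ Real.sqrt (c / γ t))
    (hopt : ∀ t : ℕ,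
      gradf (u_c (t + 1)) + γ t • (u_c (t + 1) - u_d (t + 1)) = 0)
    (hcheck : ∀ t : ℕ,
      u (t + 1) = if ‖gradf (u_c (t + 1))‖ ≤ L then u_c (t + 1) else u t) :
    CauchySeq u ∧ ∃ u_star : E, Filter.Tendsto u Filter.atTop (nhds u_star) :=
  stmt9_general gradf γ0 η c L hγ0 hη hL γ hγ u u_d u_c hbound hopt hcheck
end

section
/- (Cocoercivity of a convex function with Lipschitz gradient.) If f is convex and ∇f is Lipschitz continuous with constant L > 0, then for all x, y ∈ E, ⟪∇f(x) − ∇f(y), x − y⟫ ≥ (1/L)·‖∇f(x) − ∇f(y)‖². -/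
open scoped RealInnerProductSpace

/-!
Tilting `f` by the linear function `⟪∇f x, ·⟫` gives a convex function `φ` with `L`-Lipschitz
gradient `∇f - ∇f x` that is minimised at `x`. One gradient step of length `1 / L` from `y`
decreases `φ` by at least `‖∇φ y‖² / (2L)` (descent lemma), so
`f x + ⟪∇f x, y - x⟫ + ‖∇f y - ∇f x‖² / (2L) ≤ f y`.
Adding this to the same inequality with `x` and `y` exchanged gives cocoercivity.
-/

section

variable {E : Type*} [NormedAddCommGroup E] [InnerProductSpace ℝ E]

theorem HasFDerivAt.hasDerivAt_add_smul {f : E → ℝ} {f' : E →L[ℝ] ℝ} {x d : E} {t : ℝ}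
    (hf : HasFDerivAt f f' (x + t • d)) :
    HasDerivAt (fun s : ℝ => f (x + s • d)) (f' d) t := by
  have hline : HasDerivAt (fun s : ℝ => x + s • d) d t := by
    simpa using ((hasDerivAt_id t).smul_const d).const_add x
  exact hf.comp_hasDerivAt t hline

theorem ConvexOn.add_apply_sub_le_of_hasFDerivAt {f : E → ℝ} {f' : E →L[ℝ] ℝ} {x : E}
    (hf : ConvexOn ℝ Set.univ f) (hx : HasFDerivAt f f' x) (y : E) :
    f x + f' (y - x) ≤ f y := by
  have hline : ConvexOn ℝ Set.univ (fun t : ℝ => f (x + t • (y - x))) := by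
    simpa [Function.comp_def, AffineMap.lineMap_apply, add_comm]
      using hf.comp_affineMap (AffineMap.lineMap x y : ℝ →ᵃ[ℝ] E)
  have hderiv : HasDerivAt (fun t : ℝ => f (x + t • (y - x))) (f' (y - x)) 0 :=
    HasFDerivAt.hasDerivAt_add_smul (by simpa using hx)
  have := hline.le_slope_of_hasDerivAt (Set.mem_univ 0) (Set.mem_univ 1) zero_lt_one hderiv
  simp only [slope_def_field, zero_smul, add_zero, one_smul, add_sub_cancel] at this
  linarith

variable {f : E → ℝ} {gradf : E → E} {L : ℝ}

theorem inner_sub_le_of_lipschitz (hlip : ∀ x y : E, ‖gradf x - gradf y‖ ≤ L * ‖x - y‖)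
    (x d : E) {t : ℝ} (ht : 0 ≤ t) :
    ⟪gradf (x + t • d) - gradf x, d⟫ ≤ L * t * ‖d‖ ^ 2 :=
  calc ⟪gradf (x + t • d) - gradf x, d⟫ ≤ ‖gradf (x + t • d) - gradf x‖ * ‖d‖ :=
        real_inner_le_norm _ _
    _ ≤ L * ‖(x + t • d) - x‖ * ‖d‖ := by gcongr; exact hlip _ _
    _ = L * t * ‖d‖ ^ 2 := by
        rw [add_sub_cancel_left, norm_smul, Real.norm_of_nonneg ht]; ring

theorem le_add_inner_add_of_lipschitz_gradient
    (hgrad : ∀ x : E, HasFDerivAt f (innerSL ℝ (gradf x)) x)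
    (hlip : ∀ x y : E, ‖gradf x - gradf y‖ ≤ L * ‖x - y‖) (x y : E) :
    f y ≤ f x + ⟪gradf x, y - x⟫ + L / 2 * ‖y - x‖ ^ 2 := by
  set d := y - x
  -- The claim is `ψ 1 ≤ ψ 0`.
  set ψ : ℝ → ℝ := fun t => f (x + t • d) - t * ⟪gradf x, d⟫ - L * t ^ 2 / 2 * ‖d‖ ^ 2
  have hψ : ∀ t : ℝ, HasDerivAt ψ
      (⟪gradf (x + t • d), d⟫ - 1 * ⟪gradf x, d⟫ - L * (2 * t) / 2 * ‖d‖ ^ 2) t := fun t =>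
    (((hgrad _).hasDerivAt_add_smul.sub ((hasDerivAt_id t).mul_const _)).sub
      ((((hasDerivAt_pow 2 t).const_mul L).div_const 2).mul_const _)).congr_deriv (by simp)
  have hanti : AntitoneOn ψ (Set.Icc 0 1) := by
    refine antitoneOn_of_hasDerivWithinAt_nonpos (convex_Icc 0 1)
      (fun t _ => (hψ t).continuousAt.continuousWithinAt)
      (fun t _ => (hψ t).hasDerivWithinAt) fun t ht => ?_
    rw [interior_Icc] at ht
    have := inner_sub_le_of_lipschitz hlip x d ht.1.le
    rw [inner_sub_left] at this
    linarith
  have key := hanti (Set.left_mem_Icc.2 zero_le_one) (Set.right_mem_Icc.2 zero_le_one)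
    zero_le_one
  simp only [ψ, zero_smul, add_zero, one_smul, zero_mul, one_mul, one_pow, mul_one,
    add_sub_cancel, d] at key
  simp only [d]
  linarith

theorem le_sub_norm_sq_of_gradient_step
    (hgrad : ∀ x : E, HasFDerivAt f (innerSL ℝ (gradf x)) x)
    (hlip : ∀ x y : E, ‖gradf x - gradf y‖ ≤ L * ‖x - y‖) (hL : L ≠ 0) (y : E) :
    f (y - (1 / L) • gradf y) ≤ f y - 1 / (2 * L) * ‖gradf y‖ ^ 2 := by
  have h := le_add_inner_add_of_lipschitz_gradient hgrad hlip y (y - (1 / L) • gradf y)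
  rw [sub_sub_cancel_left, inner_neg_right, real_inner_smul_right, real_inner_self_eq_norm_sq,
    norm_neg, norm_smul, mul_pow, Real.norm_eq_abs, sq_abs] at h
  convert h using 1
  field_simp
  ring

theorem ConvexOn.add_inner_add_norm_sq_le
    (hgrad : ∀ x : E, HasFDerivAt f (innerSL ℝ (gradf x)) x) (hf : ConvexOn ℝ Set.univ f)
    (hlip : ∀ x y : E, ‖gradf x - gradf y‖ ≤ L * ‖x - y‖) (hL : L ≠ 0) (x y : E) :
    f x + ⟪gradf x, y - x⟫ + 1 / (2 * L) * ‖gradf y - gradf x‖ ^ 2 ≤ f y := by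
  set φ : E → ℝ := f - innerSL ℝ (gradf x)
  have hφgrad : ∀ z, HasFDerivAt φ (innerSL ℝ (gradf z - gradf x)) z := fun z => by
    rw [map_sub]; exact (hgrad z).sub (innerSL ℝ (gradf x)).hasFDerivAt
  have hφconv : ConvexOn ℝ Set.univ φ :=
    hf.sub ((innerSL ℝ (gradf x)).toLinearMap.concaveOn convex_univ)
  have hφlip (a b : E) : ‖(gradf a - gradf x) - (gradf b - gradf x)‖ ≤ L * ‖a - b‖ := by
    simpa using hlip a b
  have hmin (z : E) : φ x ≤ φ z := by
    simpa using hφconv.add_apply_sub_le_of_hasFDerivAt (hφgrad x) z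
  have hstep := le_sub_norm_sq_of_gradient_step hφgrad hφlip hL y
  have hmin_step := hmin (y - (1 / L) • (gradf y - gradf x))
  simp only [φ, Pi.sub_apply, innerSL_apply_apply] at hmin_step hstep
  rw [inner_sub_right]
  linarith

end

/-- Cocoercivity of a convex function with Lipschitz gradient:
if `f` is convex and `∇f` is `L`-Lipschitz with `L > 0`, then
`⟪∇f(x) − ∇f(y), x − y⟫ ≥ (1/L)·‖∇f(x) − ∇f(y)‖²`. -/
theorem stmt11
    {E : Type*} [NormedAddCommGroup E] [InnerProductSpace ℝ E]
    (f : E → ℝ) (gradf : E → E)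
    (hgrad : ∀ x : E, HasFDerivAt f (innerSL ℝ (gradf x)) x)
    (hf : ConvexOn ℝ Set.univ f)
    (L : ℝ) (hL : 0 < L)
    (hlip : ∀ x y : E, ‖gradf x - gradf y‖ ≤ L * ‖x - y‖) :
    ∀ x y : E, ⟪gradf x - gradf y, x - y⟫ ≥ (1 / L) * ‖gradf x - gradf y‖ ^ 2 := by
  intro x y
  have hxy := hf.add_inner_add_norm_sq_le hgrad hlip hL.ne' x y
  have hyx := hf.add_inner_add_norm_sq_le hgrad hlip hL.ne' y x
  rw [norm_sub_rev] at hxy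
  have hsum : ⟪gradf x, y - x⟫ + ⟪gradf y, x - y⟫ = -⟪gradf x - gradf y, x - y⟫ := by
    rw [← neg_sub x y, inner_neg_right, inner_sub_left]; ring
  have hhalf : 1 / L = 1 / (2 * L) + 1 / (2 * L) := by field_simp; norm_num
  rw [ge_iff_le, hhalf]
  linarith
end

section
/- (Squared-norm estimate for the gradient step.) Suppose f is ρ-strongly convex (i.e. u ↦ f(u) − (ρ/2)·‖u‖² is convex) with ρ > 0 and ∇f is Lipschitz continuous with constant L > 0. For γ > 0 define the gradient-step map G_γ(x) := x − (1/γ)·∇f(x). Then for all x, y ∈ E, ‖G_γ(x) − G_γ(y)‖² ≤ (1 − 2ρL/(γ·(ρ + L)))·‖x − y‖² + ((1/γ)² − 2/(γ·(ρ + L)))·‖∇f(x) − ∇f(y)‖². -/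
/-!
Write `Δ = x - y` and `δ = ∇f x - ∇f y`. Since
`‖G x - G y‖² = ‖Δ‖² - (2/γ)⟪δ, Δ⟫ + γ⁻²‖δ‖²`, the estimate is the interpolation inequality
`ρL‖Δ‖² + ‖δ‖² ≤ (ρ + L)⟪δ, Δ⟫` multiplied by `2/(γ(ρ + L))`.

For `ρ < L` the interpolation inequality is the cocoercivity of `∇h` for
`h = f - (ρ/2)‖·‖²`: both `h` and `((L - ρ)/2)‖·‖² - h = (L/2)‖·‖² - f` are convex (the latter
because `∇f` is `L`-Lipschitz, so its gradient is monotone), and comparing the first-order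
lower bound for `h` with the quadratic upper bound at the point `y - (∇h y - ∇h x)/(L - ρ)`
gives `‖∇h x - ∇h y‖² ≤ (L - ρ)⟪∇h x - ∇h y, x - y⟫`. For `L ≤ ρ` it follows directly from
`ρ‖Δ‖² ≤ ⟪δ, Δ⟫` and `‖δ‖ ≤ L‖Δ‖ ≤ ρ‖Δ‖`.
-/

open scoped RealInnerProductSpace

section GradientInequalities

open AffineMap

variable {E : Type*} [NormedAddCommGroup E] [InnerProductSpace ℝ E] {f : E → ℝ} {g : E → E}

theorem hasDerivAt_comp_lineMap_of_grad (hg : ∀ x, HasFDerivAt f (innerSL ℝ (g x)) x)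
    (x y : E) (t : ℝ) :
    HasDerivAt (f ∘ lineMap x y) ⟪g (lineMap x y t), y - x⟫ t := by
  simpa using (hg (lineMap x y t)).comp_hasDerivAt t hasDerivAt_lineMap

theorem ConvexOn.add_inner_grad_le (hf : ConvexOn ℝ Set.univ f)
    (hg : ∀ x, HasFDerivAt f (innerSL ℝ (g x)) x) (x y : E) :
    f x + ⟪g x, y - x⟫ ≤ f y := by
  have hline := hf.comp_affineMap (lineMap x y)
  have h := hline.le_slope_of_hasDerivAt (Set.mem_univ 0) (Set.mem_univ 1) one_pos
    (hasDerivAt_comp_lineMap_of_grad hg x y 0)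
  simp only [lineMap_apply_zero, lineMap_apply_one, slope_def_field, Function.comp_apply,
    sub_zero, div_one] at h
  linarith

theorem ConvexOn.inner_grad_sub_nonneg (hf : ConvexOn ℝ Set.univ f)
    (hg : ∀ x, HasFDerivAt f (innerSL ℝ (g x)) x) (x y : E) :
    0 ≤ ⟪g x - g y, x - y⟫ := by
  have hxy := hf.add_inner_grad_le hg x y
  have hyx := hf.add_inner_grad_le hg y x
  rw [← neg_sub x y, inner_neg_right] at hxy
  rw [inner_sub_left]
  linarith

theorem convexOn_univ_of_inner_grad_sub_nonneg (hg : ∀ x, HasFDerivAt f (innerSL ℝ (g x)) x)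
    (hmono : ∀ x y, 0 ≤ ⟪g x - g y, x - y⟫) : ConvexOn ℝ Set.univ f := by
  refine ⟨convex_univ, fun x _ y _ a b ha hb hab => ?_⟩
  have hderiv := fun t : ℝ => hasDerivAt_comp_lineMap_of_grad hg x y t
  have hline : ConvexOn ℝ Set.univ (f ∘ lineMap (k := ℝ) x y) := by
    refine Monotone.convexOn_univ_of_deriv (fun t => (hderiv t).differentiableAt) ?_
    intro s t hst
    rw [(hderiv s).deriv, (hderiv t).deriv]
    have hsub : lineMap x y t - lineMap x y s = (t - s) • (y - x) := by
      simp only [lineMap_apply_module']; module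
    have h := hmono (lineMap x y t) (lineMap x y s)
    rw [hsub, real_inner_smul_right, inner_sub_left] at h
    rcases hst.eq_or_lt with rfl | hlt
    · rfl
    · nlinarith
  have h := hline.2 (Set.mem_univ 0) (Set.mem_univ 1) ha hb hab
  obtain rfl : a = 1 - b := by linarith
  simpa [lineMap_apply_module] using h

theorem hasFDerivAt_half_mul_norm_sq (c : ℝ) (z : E) :
    HasFDerivAt (fun u : E => c / 2 * ‖u‖ ^ 2) (innerSL ℝ (c • z)) z := by
  refine ((hasStrictFDerivAt_norm_sq z).hasFDerivAt.const_mul (c / 2)).congr_fderiv ?_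
  ext w
  simp only [innerSL_apply_apply, real_inner_smul_left, smul_apply,
    smul_eq_mul, nsmul_eq_mul]
  ring

theorem hasFDerivAt_sub_half_mul_norm_sq (hg : ∀ x, HasFDerivAt f (innerSL ℝ (g x)) x)
    (c : ℝ) (z : E) :
    HasFDerivAt (fun u : E => f u - c / 2 * ‖u‖ ^ 2) (innerSL ℝ (g z - c • z)) z :=
  ((hg z).sub (hasFDerivAt_half_mul_norm_sq c z)).congr_fderiv (map_sub _ _ _).symm

theorem hasFDerivAt_half_mul_norm_sq_sub (hg : ∀ x, HasFDerivAt f (innerSL ℝ (g x)) x)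
    (c : ℝ) (z : E) :
    HasFDerivAt (fun u : E => c / 2 * ‖u‖ ^ 2 - f u) (innerSL ℝ (c • z - g z)) z :=
  ((hasFDerivAt_half_mul_norm_sq c z).sub (hg z)).congr_fderiv (map_sub _ _ _).symm

theorem le_add_inner_grad_add_half_mul_norm_sq
    (hg : ∀ x, HasFDerivAt f (innerSL ℝ (g x)) x) {c : ℝ}
    (hq : ConvexOn ℝ Set.univ (fun u : E => c / 2 * ‖u‖ ^ 2 - f u)) (x y : E) :
    f y ≤ f x + ⟪g x, y - x⟫ + c / 2 * ‖y - x‖ ^ 2 := by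
  have h := hq.add_inner_grad_le (hasFDerivAt_half_mul_norm_sq_sub hg c) x y
  have hnorm : ‖y - x‖ ^ 2 = ‖y‖ ^ 2 - 2 * ⟪x, y - x⟫ - ‖x‖ ^ 2 := by
    rw [← real_inner_self_eq_norm_sq, ← real_inner_self_eq_norm_sq, ← real_inner_self_eq_norm_sq]
    simp only [inner_sub_left, inner_sub_right, real_inner_comm x y]
    ring
  rw [inner_sub_left, real_inner_smul_left] at h
  rw [hnorm]
  linarith

theorem ConvexOn.add_inner_grad_add_norm_sq_div_le (hf : ConvexOn ℝ Set.univ f)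
    (hg : ∀ x, HasFDerivAt f (innerSL ℝ (g x)) x) {c : ℝ} (hc : 0 < c)
    (hq : ConvexOn ℝ Set.univ (fun u : E => c / 2 * ‖u‖ ^ 2 - f u)) (x y : E) :
    f x + ⟪g x, y - x⟫ + ‖g y - g x‖ ^ 2 / (2 * c) ≤ f y := by
  set w := y - c⁻¹ • (g y - g x)
  have hlow := hf.add_inner_grad_le hg x w
  have hup := le_add_inner_grad_add_half_mul_norm_sq hg hq y w
  have hwx : w - x = (y - x) - c⁻¹ • (g y - g x) := by simp only [w]; abel
  have hwy : w - y = -(c⁻¹ • (g y - g x)) := by simp only [w]; abel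
  rw [hwx, inner_sub_right, real_inner_smul_right] at hlow
  rw [hwy, inner_neg_right, real_inner_smul_right, norm_neg, norm_smul, Real.norm_eq_abs,
    abs_of_pos (inv_pos.2 hc)] at hup
  have hgap : c⁻¹ * ⟪g y, g y - g x⟫ - c⁻¹ * ⟪g x, g y - g x⟫ = ‖g y - g x‖ ^ 2 / c := by
    rw [← mul_sub, ← inner_sub_left, real_inner_self_eq_norm_sq, inv_mul_eq_div]
  have hsq : c / 2 * (c⁻¹ * ‖g y - g x‖) ^ 2 = ‖g y - g x‖ ^ 2 / (2 * c) := by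
    field_simp
  have hhalf : ‖g y - g x‖ ^ 2 / c = 2 * (‖g y - g x‖ ^ 2 / (2 * c)) := by
    field_simp
  rw [hsq] at hup
  linarith

theorem ConvexOn.norm_sq_grad_sub_le_mul_inner (hf : ConvexOn ℝ Set.univ f)
    (hg : ∀ x, HasFDerivAt f (innerSL ℝ (g x)) x) {c : ℝ} (hc : 0 < c)
    (hq : ConvexOn ℝ Set.univ (fun u : E => c / 2 * ‖u‖ ^ 2 - f u)) (x y : E) :
    ‖g x - g y‖ ^ 2 ≤ c * ⟪g x - g y, x - y⟫ := by
  have hxy := hf.add_inner_grad_add_norm_sq_div_le hg hc hq x y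
  have hyx := hf.add_inner_grad_add_norm_sq_div_le hg hc hq y x
  rw [norm_sub_rev] at hxy
  have hinner : ⟪g x, y - x⟫ + ⟪g y, x - y⟫ = -⟪g x - g y, x - y⟫ := by
    rw [← neg_sub x y, inner_neg_right, inner_sub_left]; ring
  have hsum : ‖g x - g y‖ ^ 2 / c ≤ ⟪g x - g y, x - y⟫ := by
    have : ‖g x - g y‖ ^ 2 / (2 * c) + ‖g x - g y‖ ^ 2 / (2 * c) = ‖g x - g y‖ ^ 2 / c := by
      field_simp; ring
    linarith
  rwa [div_le_iff₀ hc, mul_comm] at hsum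

theorem mul_norm_sq_le_inner_grad_sub (hg : ∀ x, HasFDerivAt f (innerSL ℝ (g x)) x) {ρ : ℝ}
    (hsc : ConvexOn ℝ Set.univ (fun u : E => f u - ρ / 2 * ‖u‖ ^ 2)) (x y : E) :
    ρ * ‖x - y‖ ^ 2 ≤ ⟪g x - g y, x - y⟫ := by
  have h := hsc.inner_grad_sub_nonneg (hasFDerivAt_sub_half_mul_norm_sq hg ρ) x y
  rwa [show g x - ρ • x - (g y - ρ • y) = (g x - g y) - ρ • (x - y) by module, inner_sub_left,
    real_inner_smul_left, real_inner_self_eq_norm_sq, sub_nonneg] at h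

theorem convexOn_half_mul_norm_sq_sub_of_lipschitz (hg : ∀ x, HasFDerivAt f (innerSL ℝ (g x)) x)
    {L : ℝ} (hlip : ∀ x y, ‖g x - g y‖ ≤ L * ‖x - y‖) :
    ConvexOn ℝ Set.univ (fun u : E => L / 2 * ‖u‖ ^ 2 - f u) := by
  refine convexOn_univ_of_inner_grad_sub_nonneg (hasFDerivAt_half_mul_norm_sq_sub hg L) ?_
  intro x y
  rw [show L • x - g x - (L • y - g y) = L • (x - y) - (g x - g y) by module, inner_sub_left,
    real_inner_smul_left, real_inner_self_eq_norm_sq, sub_nonneg]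
  calc ⟪g x - g y, x - y⟫ ≤ ‖g x - g y‖ * ‖x - y‖ := real_inner_le_norm _ _
    _ ≤ L * ‖x - y‖ * ‖x - y‖ := by gcongr; exact hlip x y
    _ = L * ‖x - y‖ ^ 2 := by ring

theorem norm_sub_smul_sq_real (x y : E) (a : ℝ) :
    ‖x - a • y‖ ^ 2 = ‖x‖ ^ 2 - 2 * a * ⟪x, y⟫ + a ^ 2 * ‖y‖ ^ 2 := by
  rw [norm_sub_sq_real, real_inner_smul_right, norm_smul, Real.norm_eq_abs, mul_pow, sq_abs]
  ring

theorem mul_norm_sq_add_norm_sq_grad_sub_le (hg : ∀ x, HasFDerivAt f (innerSL ℝ (g x)) x)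
    {ρ L : ℝ} (hL : 0 ≤ L) (hsc : ConvexOn ℝ Set.univ (fun u : E => f u - ρ / 2 * ‖u‖ ^ 2))
    (hlip : ∀ x y, ‖g x - g y‖ ≤ L * ‖x - y‖) (x y : E) :
    ρ * L * ‖x - y‖ ^ 2 + ‖g x - g y‖ ^ 2 ≤ (ρ + L) * ⟪g x - g y, x - y⟫ := by
  rcases lt_or_ge ρ L with hρL | hLρ
  · have hq : ConvexOn ℝ Set.univ
        (fun u : E => (L - ρ) / 2 * ‖u‖ ^ 2 - (f u - ρ / 2 * ‖u‖ ^ 2)) :=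
      (convexOn_half_mul_norm_sq_sub_of_lipschitz hg hlip).congr fun u _ => by ring
    have hco := hsc.norm_sq_grad_sub_le_mul_inner (hasFDerivAt_sub_half_mul_norm_sq hg ρ)
      (sub_pos.2 hρL) hq x y
    rw [show g x - ρ • x - (g y - ρ • y) = (g x - g y) - ρ • (x - y) by module,
      norm_sub_smul_sq_real, inner_sub_left (g x - g y), real_inner_smul_left,
      real_inner_self_eq_norm_sq] at hco
    linear_combination hco
  · have hmono := mul_norm_sq_le_inner_grad_sub hg hsc x y
    have hlip_sq : ‖g x - g y‖ ^ 2 ≤ L ^ 2 * ‖x - y‖ ^ 2 := by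
      rw [← mul_pow]; exact pow_le_pow_left₀ (norm_nonneg _) (hlip x y) 2
    nlinarith [mul_le_mul_of_nonneg_left hmono (add_nonneg hL (hL.trans hLρ)),
      mul_le_mul_of_nonneg_right (pow_le_pow_left₀ hL hLρ 2) (sq_nonneg ‖x - y‖)]

end GradientInequalities

/-- Squared-norm estimate for the gradient step: for the
gradient-step map `G_γ(x) = x − (1/γ)·∇f(x)` of a `ρ`-strongly convex function
with `L`-Lipschitz gradient and `γ > 0`,
`‖G_γ(x) − G_γ(y)‖² ≤ (1 − 2ρL/(γ(ρ+L)))·‖x−y‖² + ((1/γ)² − 2/(γ(ρ+L)))·‖∇f(x)−∇f(y)‖²`. -/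
theorem stmt13
    {E : Type*} [NormedAddCommGroup E] [InnerProductSpace ℝ E]
    (f : E → ℝ) (gradf : E → E)
    (hgrad : ∀ x : E, HasFDerivAt f (innerSL ℝ (gradf x)) x)
    (ρ L : ℝ) (hρ : 0 < ρ) (hL : 0 < L)
    (hsc : ConvexOn ℝ Set.univ (fun u : E => f u - (ρ / 2) * ‖u‖ ^ 2))
    (hlip : ∀ x y : E, ‖gradf x - gradf y‖ ≤ L * ‖x - y‖)
    (γ : ℝ) (hγ : 0 < γ)
    (G : E → E) (hG : ∀ x : E, G x = x - (1 / γ) • gradf x) :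
    ∀ x y : E, ‖G x - G y‖ ^ 2 ≤
      (1 - 2 * ρ * L / (γ * (ρ + L))) * ‖x - y‖ ^ 2 +
        ((1 / γ) ^ 2 - 2 / (γ * (ρ + L))) * ‖gradf x - gradf y‖ ^ 2 := by
  intro x y
  have hkey := mul_norm_sq_add_norm_sq_grad_sub_le hgrad hL.le hsc hlip x y
  have hstep : G x - G y = (x - y) - (1 / γ) • (gradf x - gradf y) := by
    rw [hG, hG]; module
  set c := 2 / (γ * (ρ + L)) with hc
  have hc_nonneg : 0 ≤ c := by positivity
  have hcρL : 2 * ρ * L / (γ * (ρ + L)) = c * (ρ * L) := by rw [hc]; ring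
  have hcγ : 2 * (1 / γ) = c * (ρ + L) := by rw [hc]; field_simp
  rw [hstep, norm_sub_smul_sq_real, real_inner_comm, hcρL, hcγ]
  linear_combination mul_le_mul_of_nonneg_left hkey hc_nonneg
end
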